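/- arXiv:2312.07703 — 2 statements merged into one kernel-verified Lean document; each statement's English description precedes it below -/
import Mathlib

section
/- With C₀ = 1/(β₁e^{β₁a₀} − β₂e^{β₂a₀}) and β₁²e^{β₁a₀} = β₂²e^{β₂a₀}, one has C₀ = β₂/(β₁(β₂ − β₁))·e^{−β₁a₀}, and consequently φ(ℓ) = v₀'(a₀ − ℓ) for ℓ ∈ [0, a₀], where v₀'(x) = C₀(β₁e^{β₁x} − β₂e^{β₂x}) and φ(ℓ) = (β₁e^{β₁ℓ} − β₂e^{β₂ℓ})e^{−(β₁+β₂)ℓ}/(β₁ − β₂). -/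
/-!
The condition `β₁² e^{β₁a₀} = β₂² e^{β₂a₀}`, i.e. `v₀''(a₀) = 0`, lets one eliminate `e^{β₂a₀}`:
multiplying `C₀⁻¹ = β₁e^{β₁a₀} − β₂e^{β₂a₀}` by `β₂` gives `β₁(β₂ − β₁)e^{β₁a₀}`, which is the
formula for `C₀`. Substituting it, both `φ(ℓ)` and `C₀ v₀'(a₀ − ℓ)` reduce to
`(β₁e^{−β₂ℓ} − β₂e^{−β₁ℓ})/(β₁ − β₂)`.
-/

open Real

section

variable {β₁ β₂ a : ℝ}

theorem mul_sub_mul_exp_eq_of_sq_mul_exp_eq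
    (hsp : β₁ ^ 2 * exp (β₁ * a) = β₂ ^ 2 * exp (β₂ * a)) :
    β₂ * (β₁ * exp (β₁ * a) - β₂ * exp (β₂ * a)) = β₁ * (β₂ - β₁) * exp (β₁ * a) := by
  linear_combination hsp

theorem inv_sub_mul_exp_eq_of_sq_mul_exp_eq (h₂ : β₂ ≠ 0)
    (hsp : β₁ ^ 2 * exp (β₁ * a) = β₂ ^ 2 * exp (β₂ * a)) :
    (β₁ * exp (β₁ * a) - β₂ * exp (β₂ * a))⁻¹ = β₂ / (β₁ * (β₂ - β₁)) * exp (-β₁ * a) := by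
  have hD : β₁ * exp (β₁ * a) - β₂ * exp (β₂ * a) = β₁ * (β₂ - β₁) * exp (β₁ * a) / β₂ := by
    rw [eq_div_iff h₂, mul_comm]
    exact mul_sub_mul_exp_eq_of_sq_mul_exp_eq hsp
  rw [hD, inv_div, neg_mul, exp_neg, ← div_eq_mul_inv, div_div]

theorem sub_mul_exp_mul_exp_neg_add (ℓ : ℝ) :
    (β₁ * exp (β₁ * ℓ) - β₂ * exp (β₂ * ℓ)) * exp (-(β₁ + β₂) * ℓ) =
      β₁ * exp (-β₂ * ℓ) - β₂ * exp (-β₁ * ℓ) := by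
  rw [sub_mul, mul_assoc, mul_assoc, ← exp_add, ← exp_add]
  ring_nf

theorem inv_sub_mul_exp_mul_sub_mul_exp_sub_eq_of_sq_mul_exp_eq
    (h₁ : β₁ ≠ 0) (h₂ : β₂ ≠ 0) (h₁₂ : β₁ ≠ β₂)
    (hsp : β₁ ^ 2 * exp (β₁ * a) = β₂ ^ 2 * exp (β₂ * a)) (ℓ : ℝ) :
    (β₁ * exp (β₁ * a) - β₂ * exp (β₂ * a))⁻¹ *
        (β₁ * exp (β₁ * (a - ℓ)) - β₂ * exp (β₂ * (a - ℓ))) =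
      (β₁ * exp (-β₂ * ℓ) - β₂ * exp (-β₁ * ℓ)) / (β₁ - β₂) := by
  rw [inv_sub_mul_exp_eq_of_sq_mul_exp_eq h₂ hsp]
  have h₂₁ : β₂ - β₁ ≠ 0 := sub_ne_zero.mpr h₁₂.symm
  have hsplit (β : ℝ) : exp (β * (a - ℓ)) = exp (β * a) * exp (-β * ℓ) := by
    rw [← exp_add]; ring_nf
  rw [hsplit, hsplit, neg_mul β₁ a, exp_neg]
  field_simp
  linear_combination (β₁ - β₂) * exp (-(β₂ * ℓ)) * hsp

end

theorem C0_and_phi_eq_general (β₁ β₂ a₀ : ℝ) (hβ₁ : 0 < β₁) (hβ₂ : β₂ < 0)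
    (hsp : β₁ ^ 2 * Real.exp (β₁ * a₀) = β₂ ^ 2 * Real.exp (β₂ * a₀)) :
    (β₁ * Real.exp (β₁ * a₀) - β₂ * Real.exp (β₂ * a₀))⁻¹ =
        β₂ / (β₁ * (β₂ - β₁)) * Real.exp (-β₁ * a₀) ∧
    ∀ ℓ : ℝ, 0 ≤ ℓ → ℓ ≤ a₀ →
      (β₁ * Real.exp (β₁ * ℓ) - β₂ * Real.exp (β₂ * ℓ)) *
          Real.exp (-(β₁ + β₂) * ℓ) / (β₁ - β₂) =
        (β₁ * Real.exp (β₁ * a₀) - β₂ * Real.exp (β₂ * a₀))⁻¹ *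
          (β₁ * Real.exp (β₁ * (a₀ - ℓ)) - β₂ * Real.exp (β₂ * (a₀ - ℓ))) := by
  refine ⟨inv_sub_mul_exp_eq_of_sq_mul_exp_eq hβ₂.ne hsp, fun ℓ _ _ => ?_⟩
  rw [sub_mul_exp_mul_exp_neg_add,
    inv_sub_mul_exp_mul_sub_mul_exp_sub_eq_of_sq_mul_exp_eq hβ₁.ne' hβ₂.ne (hβ₂.trans hβ₁).ne' hsp]

/-- With C₀ = 1/(β₁e^{β₁a₀} − β₂e^{β₂a₀}) and β₁²e^{β₁a₀} = β₂²e^{β₂a₀}, one has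
C₀ = β₂/(β₁(β₂ − β₁))·e^{−β₁a₀}, and hence φ(ℓ) = v₀'(a₀ − ℓ) for ℓ ∈ [0,a₀],
where v₀'(x) = C₀(β₁e^{β₁x} − β₂e^{β₂x}). -/
theorem C0_and_phi_eq (β₁ β₂ a₀ : ℝ) (hβ₁ : 0 < β₁) (hβ₂ : β₂ < 0) (ha : 0 < a₀)
    (hsp : β₁ ^ 2 * Real.exp (β₁ * a₀) = β₂ ^ 2 * Real.exp (β₂ * a₀)) :
    (β₁ * Real.exp (β₁ * a₀) - β₂ * Real.exp (β₂ * a₀))⁻¹ =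
        β₂ / (β₁ * (β₂ - β₁)) * Real.exp (-β₁ * a₀) ∧
    ∀ ℓ : ℝ, 0 ≤ ℓ → ℓ ≤ a₀ →
      (β₁ * Real.exp (β₁ * ℓ) - β₂ * Real.exp (β₂ * ℓ)) *
          Real.exp (-(β₁ + β₂) * ℓ) / (β₁ - β₂) =
        (β₁ * Real.exp (β₁ * a₀) - β₂ * Real.exp (β₂ * a₀))⁻¹ *
          (β₁ * Real.exp (β₁ * (a₀ - ℓ)) - β₂ * Real.exp (β₂ * (a₀ - ℓ))) :=
  C0_and_phi_eq_general β₁ β₂ a₀ hβ₁ hβ₂ hsp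
end

section
/- Suppose A, B : [−a₀, 0] → ℝ satisfy A(z)e^{−β₁z} + B(z)e^{−β₂z} = 0 and A'(z)e^{β₁a₀} + B'(z)e^{β₂a₀} = A(z)β₁e^{β₁a₀} + B(z)β₂e^{β₂a₀} for all z, with A, B differentiable. Then A'(z) = β₁A(z) for all z ∈ [−a₀, 0], hence A(z) = A(0)e^{β₁z} and B(z) = −A(0)e^{β₂z}. -/
open Set Filter Topology Real

/-!
Differentiating `A(z)e^{-β₁z} + B(z)e^{-β₂z} = 0` gives a second linear relation between
`A' - β₁A` and `B' - β₂B`; together with the given one it forms a 2×2 system that is invertible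
for `z > -a₀` because `β₁ ≠ β₂`. So `A' = β₁A` on the open interval, whence `A = A(0)e^{β₁z}` on
the closed interval by the mean value theorem, and `B` is then read off the first identity.
-/

theorem HasDerivAt.mul_exp_const_mul {f : ℝ → ℝ} {f' c x : ℝ} (hf : HasDerivAt f f' x) :
    HasDerivAt (fun t => f t * Real.exp (c * t)) ((f' + c * f x) * Real.exp (c * x)) x := by
  refine (hf.mul ((hasDerivAt_id x).const_mul c).exp).congr_deriv ?_
  simp only [id, mul_one]
  ring

theorem eq_right_of_hasDerivAt_zero {g : ℝ → ℝ} {a b : ℝ} (hg : ContinuousOn g (Icc a b))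
    (hg' : ∀ x ∈ Ioo a b, HasDerivAt g 0 x) : ∀ x ∈ Icc a b, g x = g b := by
  intro x hx
  rcases hx.2.eq_or_lt with rfl | hxb
  · rfl
  obtain ⟨c, hc, hslope⟩ := exists_hasDerivAt_eq_slope g (fun _ => 0) hxb
    (hg.mono (Icc_subset_Icc_left hx.1)) fun y hy => hg' y ⟨hx.1.trans_lt hy.1, hy.2⟩
  rw [eq_comm, div_eq_zero_iff, sub_eq_zero] at hslope
  exact (hslope.resolve_right (sub_ne_zero.2 hxb.ne')).symm

theorem eq_mul_exp_of_hasDerivAt_eq_mul {f : ℝ → ℝ} {a b c : ℝ} (hf : ContinuousOn f (Icc a b))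
    (hf' : ∀ x ∈ Ioo a b, HasDerivAt f (c * f x) x) :
    ∀ x ∈ Icc a b, f x = f b * exp (c * (x - b)) := by
  have hconst := eq_right_of_hasDerivAt_zero (g := fun t => f t * exp (-c * t))
    (hf.mul (by fun_prop)) fun x hx => by
      simpa using (hf' x hx).mul_exp_const_mul (c := -c)
  intro x hx
  have hx' : f x * exp (-c * x) = f b * exp (-c * b) := hconst x hx
  calc f x = f x * exp (-c * x) * exp (c * x) := by
        rw [mul_assoc, ← exp_add]; simp
    _ = f b * exp (c * (x - b)) := by
        rw [hx', mul_assoc, ← exp_add]; ring_nf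

theorem deriv_eq_of_eqOn_Icc {f g : ℝ → ℝ} {a b x : ℝ} (hab : a < b)
    (hf : DifferentiableAt ℝ f x) (hg : DifferentiableAt ℝ g x) (hfg : EqOn f g (Icc a b))
    (hx : x ∈ Icc a b) : deriv f x = deriv g x := by
  have hu := uniqueDiffOn_Icc hab x hx
  rw [← hf.derivWithin hu, ← hg.derivWithin hu, derivWithin_congr hfg (hfg hx)]

theorem deriv_eq_mul_of_exp_combination_eq_zero {A B : ℝ → ℝ} {β₁ β₂ a₀ z : ℝ} (hβ : β₁ ≠ β₂)
    (hz : z ≠ -a₀) (hA : DifferentiableAt ℝ A z) (hB : DifferentiableAt ℝ B z)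
    (h0 : (fun t => A t * exp (-β₁ * t) + B t * exp (-β₂ * t)) =ᶠ[𝓝 z] 0)
    (hrefl : deriv A z * exp (β₁ * a₀) + deriv B z * exp (β₂ * a₀) =
        A z * β₁ * exp (β₁ * a₀) + B z * β₂ * exp (β₂ * a₀)) :
    deriv A z = β₁ * A z := by
  have hsum : (deriv A z + -β₁ * A z) * exp (-β₁ * z) +
      (deriv B z + -β₂ * B z) * exp (-β₂ * z) = 0 := by
    rw [← (hA.hasDerivAt.mul_exp_const_mul.add hB.hasDerivAt.mul_exp_const_mul).deriv]
    exact h0.deriv_eq.trans (deriv_const z 0)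
  -- the determinant of the linear system for `(A' - β₁ A, B' - β₂ B)` vanishes only at `z = -a₀`
  have hdet : exp (-β₁ * z + β₂ * a₀) ≠ exp (-β₂ * z + β₁ * a₀) := by
    rw [Ne, exp_eq_exp]
    intro h
    have : (β₁ - β₂) * (z + a₀) = 0 := by linear_combination -h
    rcases mul_eq_zero.1 this with h | h
    · exact hβ (sub_eq_zero.1 h)
    · exact hz (eq_neg_of_add_eq_zero_left h)
  have key :
      (deriv A z - β₁ * A z) * (exp (-β₁ * z + β₂ * a₀) - exp (-β₂ * z + β₁ * a₀)) = 0 := by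
    rw [exp_add, exp_add]
    linear_combination exp (β₂ * a₀) * hsum - exp (-β₂ * z) * hrefl
  rcases mul_eq_zero.1 key with h | h
  · linarith
  · exact absurd (sub_eq_zero.1 h) hdet

/-- If differentiable A, B satisfy A(z)e^{−β₁z} + B(z)e^{−β₂z} = 0 and
A'(z)e^{β₁a₀} + B'(z)e^{β₂a₀} = A(z)β₁e^{β₁a₀} + B(z)β₂e^{β₂a₀} on [−a₀,0],
then A'(z) = β₁A(z) on [−a₀,0], hence A(z) = A(0)e^{β₁z} and
B(z) = −A(0)e^{β₂z}. -/
theorem AB_explicit (β₁ β₂ a₀ : ℝ) (A B : ℝ → ℝ) (hβ₁ : 0 < β₁) (hβ₂ : β₂ < 0)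
    (ha : 0 < a₀) (hA : Differentiable ℝ A) (hB : Differentiable ℝ B)
    (h0 : ∀ z ∈ Icc (-a₀) 0,
      A z * Real.exp (-β₁ * z) + B z * Real.exp (-β₂ * z) = 0)
    (hrefl : ∀ z ∈ Icc (-a₀) 0,
      deriv A z * Real.exp (β₁ * a₀) + deriv B z * Real.exp (β₂ * a₀) =
        A z * β₁ * Real.exp (β₁ * a₀) + B z * β₂ * Real.exp (β₂ * a₀)) :
    ∀ z ∈ Icc (-a₀) 0,
      deriv A z = β₁ * A z ∧
      A z = A 0 * Real.exp (β₁ * z) ∧ B z = -A 0 * Real.exp (β₂ * z) := by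
  have hA' : ∀ z ∈ Ioo (-a₀) 0, HasDerivAt A (β₁ * A z) z := fun z hz => by
    rw [← deriv_eq_mul_of_exp_combination_eq_zero (hβ₂.trans hβ₁).ne' hz.1.ne' (hA z) (hB z)
      (eventually_of_mem (Ioo_mem_nhds hz.1 hz.2) fun t ht => h0 t (Ioo_subset_Icc_self ht))
      (hrefl z (Ioo_subset_Icc_self hz))]
    exact (hA z).hasDerivAt
  have hAexp : ∀ z ∈ Icc (-a₀) 0, A z = A 0 * exp (β₁ * z) := by
    simpa using eq_mul_exp_of_hasDerivAt_eq_mul hA.continuous.continuousOn hA'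
  intro z hz
  refine ⟨?_, hAexp z hz, ?_⟩
  · rw [deriv_eq_of_eqOn_Icc (neg_lt_zero.2 ha) (hA z) (by fun_prop) hAexp hz,
      hAexp z hz, ((hasDerivAt_const z (A 0)).mul_exp_const_mul).deriv]
    ring
  · calc B z = B z * exp (-β₂ * z) * exp (β₂ * z) := by rw [mul_assoc, ← exp_add]; simp
      _ = -(A z * exp (-β₁ * z)) * exp (β₂ * z) := by rw [eq_neg_of_add_eq_zero_right (h0 z hz)]
      _ = -A 0 * exp (β₂ * z) := by rw [hAexp z hz, mul_assoc, ← exp_add]; simp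
end
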